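/- arXiv:1101.5702 — 2 statements merged into one kernel-verified Lean document; each statement's English description precedes it below -/
import Mathlib

section
/- Let X be a finite T0 topological space with n points that has path-shaped Hasse diagram, witnessed by a bijection e : {0, 1, …, n−1} → X such that for all i, j, (e(i) ⋖ e(j) or e(j) ⋖ e(i)) holds if and only if |i − j| = 1. Then for a nonempty subset Y ⊆ X the following are equivalent: (1) Y is connected and locally closed; (2) Y is an interval with respect to the enumeration e, i.e. there exist i ≤ j with Y = {e(k) | i ≤ k ≤ j}. -/
/-!
If `e i ≤ e j` along a Hasse path `e`, a saturated chain from `e i` up to `e j` is a walk in the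
path without repetitions, so it runs straight through the index segment between `i` and `j`:
`e` is monotone on that segment. Hence for `e s ≤ e t` the order interval `[e s, e t]` is exactly
the image of the index segment between `s` and `t`.

In a finite T0-space the open sets are the up-sets and the closed sets the down-sets, so the
locally closed sets are the order-convex ones. A convex set `Y` containing indices on both sides
of a missing index `r` is disconnected: by connectedness some point left of `r` would be comparable
to some point right of `r`, and convexity would put `e r` in `Y`. Conversely an index interval is a
chain of comparable consecutive points, hence connected, and it is convex by the description of
order intervals above.
-/

/-- The specialisation order of a topological space: `x ⪯ y` iff `x ∈ closure {y}`. -/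
def specLE {X : Type*} [TopologicalSpace X] (x y : X) : Prop := x ∈ closure ({y} : Set X)

/-- Strict specialisation: `x ≺ y`. -/
def specLT {X : Type*} [TopologicalSpace X] (x y : X) : Prop := specLE x y ∧ x ≠ y

/-- The covering relation of the specialisation order: `x ⋖ y`. -/
def specCov {X : Type*} [TopologicalSpace X] (x y : X) : Prop :=
  specLT x y ∧ ¬ ∃ z, specLT x z ∧ specLT z y

open Set Order

theorem Fin.covBy_iff_val_add_one_eq {n : ℕ} {i j : Fin n} : i ⋖ j ↔ i.val + 1 = j.val := by
  have : (range (Fin.valOrderEmb n)).OrdConnected := Fin.range_val ▸ ordConnected_Iio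
  rw [← Nat.covBy_iff_add_one_eq, ← this.apply_covBy_apply_iff]
  rfl

section SpecializationOrder

attribute [local instance] specializationOrder

variable {X : Type*} [TopologicalSpace X] [T0Space X]

theorem specCov_iff_covBy {x y : X} : specCov x y ↔ x ⋖ y := by
  have hlt : ∀ a b : X, specLT a b ↔ a < b := fun a b => by
    rw [specLT, specLE, ← specializes_iff_mem_closure, lt_iff_le_and_ne]; rfl
  simp only [specCov, hlt, CovBy, not_exists, not_and]

theorem isUpperSet_specializationOrder [AlexandrovDiscrete X] : Topology.IsUpperSet X := by
  refine Topology.isUpperSet_iff_nhds.2 fun a => ?_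
  rw [← principal_nhdsKer_singleton]
  exact congrArg Filter.principal (ext fun _ => mem_nhdsKer_singleton)

end SpecializationOrder

section Specializes

variable {X : Type*} [TopologicalSpace X] {s t u : Set X} {x y : X}

theorem Specializes.isPreconnected_pair (h : x ⤳ y) : IsPreconnected ({x, y} : Set X) :=
  isPreconnected_singleton.subset_closure (singleton_subset_iff.2 (mem_insert x {y}))
    (insert_subset_iff.2 ⟨subset_closure rfl, singleton_subset_iff.2 h.mem_closure⟩)

theorem IsPreconnected.insert_of_specializes (hs : IsPreconnected s) (hx : x ∈ s)
    (h : x ⤳ y ∨ y ⤳ x) : IsPreconnected (insert y s) := by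
  have hxy : IsPreconnected ({x, y} : Set X) :=
    h.elim Specializes.isPreconnected_pair fun h => pair_comm y x ▸ h.isPreconnected_pair
  have hunion : {x, y} ∪ s = insert y s := by
    rw [insert_union, singleton_union, insert_eq_of_mem (mem_insert_of_mem y hx)]
  exact hunion ▸ hxy.union x (mem_insert x {y}) hx hs

theorem IsPreconnected.exists_specializes_of_subset_union [AlexandrovDiscrete X]
    (hs : IsPreconnected s) (hst : s ⊆ t ∪ u) (ht : (s ∩ t).Nonempty) (hu : (s ∩ u).Nonempty) :
    ∃ a ∈ s ∩ t, ∃ b ∈ s ∩ u, a ⤳ b ∨ b ⤳ a := by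
  obtain ⟨x, hxs, hxt, hxu⟩ := hs (nhdsKer (s ∩ t)) (nhdsKer (s ∩ u)) isOpen_nhdsKer isOpen_nhdsKer
    (fun x hx => (hst hx).imp (fun h => subset_nhdsKer ⟨hx, h⟩) fun h => subset_nhdsKer ⟨hx, h⟩)
    (ht.mono fun a ha => ⟨ha.1, subset_nhdsKer ha⟩) (hu.mono fun a ha => ⟨ha.1, subset_nhdsKer ha⟩)
  obtain ⟨a, ha, hxa⟩ := mem_nhdsKer_iff_specializes.1 hxt
  obtain ⟨b, hb, hxb⟩ := mem_nhdsKer_iff_specializes.1 hxu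
  rcases hst hxs with hx | hx
  · exact ⟨x, ⟨hxs, hx⟩, b, hb, Or.inl hxb⟩
  · exact ⟨a, ha, x, ⟨hxs, hx⟩, Or.inr hxa⟩

end Specializes

theorem Topology.IsUpperSet.isLocallyClosed_iff_ordConnected {α : Type*} [Preorder α]
    [TopologicalSpace α] [Topology.IsUpperSet α] {s : Set α} :
    IsLocallyClosed s ↔ s.OrdConnected := by
  constructor
  · rintro ⟨U, Z, hU, hZ, rfl⟩
    exact (isOpen_iff_isUpperSet.1 hU).ordConnected.inter (isClosed_iff_isLower.1 hZ).ordConnected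
  · intro hs
    exact ⟨upperClosure s, lowerClosure s, isOpen_iff_isUpperSet.2 (upperClosure s).upper,
      isClosed_iff_isLower.2 (lowerClosure s).lower, hs.upperClosure_inter_lowerClosure.symm⟩

theorem MonotoneOn.Icc_of_covBy {α β : Type*} [LinearOrder α] [Preorder β] {f : α → β}
    {a b c : α} (hf : MonotoneOn f (Icc a b)) (hab : a ≤ b) (hbc : b ⋖ c) (h : f b ≤ f c) :
    MonotoneOn f (Icc a c) := by
  rw [← Icc_union_Icc_eq_Icc hab hbc.le]
  refine hf.union_right ?_ (isGreatest_Icc hab) (isLeast_Icc hbc.le)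
  rw [hbc.Icc_eq]
  rintro x (rfl | rfl) y (rfl | rfl) hxy
  exacts [le_rfl, h, absurd hxy hbc.lt.not_ge, le_rfl]

def IsHassePath {P : Type*} [PartialOrder P] {n : ℕ} (e : Fin n ≃ P) : Prop :=
  ∀ i j, (e i ⋖ e j ∨ e j ⋖ e i) ↔ (i ⋖ j ∨ j ⋖ i)

namespace IsHassePath

section Order

variable {P : Type*} [PartialOrder P] {n : ℕ} {e : Fin n ≃ P}

theorem dual (he : IsHassePath e) : IsHassePath (e.trans OrderDual.toDual) := fun i j => by
  simpa only [Equiv.trans_apply, toDual_covBy_toDual_iff, or_comm] using he i j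

theorem le_or_le_succ (he : IsHassePath e) (k : Fin n) : e k ≤ e (succ k) ∨ e (succ k) ≤ e k := by
  rcases (wcovBy_succ k).eq_or_covBy with h | h
  · exact Or.inl (h ▸ le_rfl)
  · exact ((he k (succ k)).2 (Or.inl h)).imp CovBy.le CovBy.le

theorem monotoneOn_Icc (he : IsHassePath e) {i j : Fin n} (hij : i ≤ j) (h : e i ≤ e j) :
    MonotoneOn e (Icc i j) := by
  have : Finite P := .of_equiv _ e
  suffices ∀ y j, e j = y → i ≤ j → e i ≤ e j → MonotoneOn e (Icc i j) from this _ j rfl hij h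
  intro y
  induction y using WellFoundedLT.induction with
  | _ y ih =>
  rintro j rfl hij h
  rcases hij.eq_or_lt with rfl | hij
  · simp
  obtain ⟨z, hiz, hzj⟩ := exists_le_covBy_of_lt (h.lt_of_ne (e.injective.ne hij.ne))
  obtain ⟨j', rfl⟩ := e.surjective z
  rcases (he j' j).1 (Or.inl hzj) with hj'j | hjj'
  · have hij' : i ≤ j' := hj'j.le_of_lt hij
    exact (ih _ hzj.lt j' rfl hij' hiz).Icc_of_covBy hij' hj'j hzj.le
  · have hmono := ih _ hzj.lt j' rfl (hij.le.trans hjj'.le) hiz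
    exact absurd (hmono ⟨hij.le, hjj'.le⟩ ⟨hij.le.trans hjj'.le, le_rfl⟩ hjj'.le) hzj.lt.not_ge

theorem antitoneOn_Icc (he : IsHassePath e) {i j : Fin n} (hij : i ≤ j) (h : e j ≤ e i) :
    AntitoneOn e (Icc i j) :=
  he.dual.monotoneOn_Icc hij h

theorem mem_Icc_of_mem_uIcc (he : IsHassePath e) {s t r : Fin n} (h : e s ≤ e t)
    (hr : r ∈ uIcc s t) : e r ∈ Icc (e s) (e t) := by
  rcases le_total s t with hst | hts
  · rw [uIcc_of_le hst] at hr
    exact ⟨he.monotoneOn_Icc hst h ⟨le_rfl, hst⟩ hr hr.1,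
      he.monotoneOn_Icc hst h hr ⟨hst, le_rfl⟩ hr.2⟩
  · rw [uIcc_of_ge hts] at hr
    exact ⟨he.antitoneOn_Icc hts h hr ⟨hts, le_rfl⟩ hr.2,
      he.antitoneOn_Icc hts h ⟨le_rfl, hts⟩ hr hr.1⟩

theorem mem_uIcc_of_mem_Icc (he : IsHassePath e) {a b p : Fin n} (hp : e p ∈ Icc (e a) (e b)) :
    p ∈ uIcc a b := by
  have hpa : a ∈ uIcc p b → p = a := fun ha =>
    e.injective ((he.mem_Icc_of_mem_uIcc hp.2 ha).1.antisymm hp.1)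
  have hpb : b ∈ uIcc a p → p = b := fun hb =>
    e.injective (hp.2.antisymm (he.mem_Icc_of_mem_uIcc hp.1 hb).2)
  have : p ∈ uIcc a b ∨ a ∈ uIcc p b ∨ b ∈ uIcc a p := by simp only [mem_uIcc]; omega
  rcases this with h | h | h
  · exact h
  · exact hpa h ▸ left_mem_uIcc
  · exact hpb h ▸ right_mem_uIcc

theorem ordConnected_image (he : IsHassePath e) {S : Set (Fin n)} (hS : S.OrdConnected) :
    (e '' S).OrdConnected := by
  refine ⟨?_⟩
  rintro _ ⟨a, ha, rfl⟩ _ ⟨b, hb, rfl⟩ x hx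
  obtain ⟨p, rfl⟩ := e.surjective x
  exact mem_image_of_mem e (hS.uIcc_subset ha hb (he.mem_uIcc_of_mem_Icc hx))

end Order

section Topology

variable {α : Type*} [PartialOrder α] [TopologicalSpace α] [Topology.IsUpperSet α] {n : ℕ}
  {e : Fin n ≃ α}

open Topology.IsUpperSet

theorem isPreconnected_image_Icc (he : IsHassePath e) {i j : Fin n} (hij : i ≤ j) :
    IsPreconnected (e '' Icc i j) := by
  induction hij using Succ.rec with
  | rfl => rw [Icc_self, image_singleton]; exact isPreconnected_singleton
  | succ k hik ih =>
    rw [Icc_succ_right (hik.trans (le_succ k)), image_insert_eq]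
    refine ih.insert_of_specializes (mem_image_of_mem e ⟨hik, le_rfl⟩) ?_
    simpa only [specializes_iff_le, or_comm] using he.le_or_le_succ k

theorem ordConnected_preimage (he : IsHassePath e) {s : Set α} (hs : IsPreconnected s)
    (hs' : s.OrdConnected) : (e ⁻¹' s).OrdConnected := by
  refine ⟨fun p hp q hq r hr => by_contra fun hrs => ?_⟩
  have hcover : s ⊆ e '' Iio r ∪ e '' Ioi r := fun x hx => by
    obtain ⟨k, rfl⟩ := e.surjective x
    rcases lt_trichotomy k r with h | rfl | h
    · exact Or.inl (mem_image_of_mem e h)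
    · exact absurd hx hrs
    · exact Or.inr (mem_image_of_mem e h)
  have hpr : p < r := hr.1.lt_of_ne fun h => hrs (h ▸ hp)
  have hrq : r < q := hr.2.lt_of_ne fun h => hrs (h ▸ hq)
  obtain ⟨_, ⟨hks, k, hkr, rfl⟩, _, ⟨hls, l, hrl, rfl⟩, hkl⟩ :=
    hs.exists_specializes_of_subset_union hcover
      ⟨e p, hp, mem_image_of_mem e hpr⟩ ⟨e q, hq, mem_image_of_mem e hrq⟩
  have hkl' : r ∈ uIcc k l := Icc_subset_uIcc ⟨hkr.le, hrl.le⟩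
  have hlk' : r ∈ uIcc l k := uIcc_comm k l ▸ hkl'
  rcases hkl with h | h
  · exact hrs (hs'.out hls hks (he.mem_Icc_of_mem_uIcc (specializes_iff_le.1 h) hlk'))
  · exact hrs (hs'.out hks hls (he.mem_Icc_of_mem_uIcc (specializes_iff_le.1 h) hkl'))

theorem isConnected_and_ordConnected_iff (he : IsHassePath e) {s : Set α} (hs : s.Nonempty) :
    (IsConnected s ∧ s.OrdConnected) ↔ ∃ i j, i ≤ j ∧ s = e '' Icc i j := by
  constructor
  · rintro ⟨hconn, hs'⟩
    have hS : (e ⁻¹' s).Nonempty := hs.preimage e.surjective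
    have : NeZero n := ⟨hS.some.pos.ne'⟩
    have hIcc := hS.ordConnected_iff_of_bdd'.1 (he.ordConnected_preimage hconn.isPreconnected hs')
    exact ⟨_, _, sInf_le_sSup hS, by rw [← hIcc, e.image_preimage]⟩
  · rintro ⟨i, j, hij, rfl⟩
    exact ⟨⟨(nonempty_Icc.2 hij).image e, he.isPreconnected_image_Icc hij⟩,
      he.ordConnected_image ordConnected_Icc⟩

end Topology

end IsHassePath

theorem stmt12_general {X : Type*} [TopologicalSpace X] [T0Space X]
    (n : ℕ) (e : Fin n ≃ X)
    (he : ∀ i j : Fin n,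
      (specCov (e i) (e j) ∨ specCov (e j) (e i)) ↔ (i.val + 1 = j.val ∨ j.val + 1 = i.val))
    (Y : Set X) (hY : Y.Nonempty) :
    (IsConnected Y ∧ IsLocallyClosed Y) ↔
      ∃ i j : Fin n, i ≤ j ∧ Y = ⇑e '' {k : Fin n | i ≤ k ∧ k ≤ j} := by
  have : Finite X := .of_equiv _ e
  let := specializationOrder X
  have : Topology.IsUpperSet X := isUpperSet_specializationOrder
  have hpath : IsHassePath e := fun i j => by
    simpa only [specCov_iff_covBy, Fin.covBy_iff_val_add_one_eq] using he i j
  rw [Topology.IsUpperSet.isLocallyClosed_iff_ordConnected]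
  exact hpath.isConnected_and_ordConnected_iff hY

/-- In a finite T0-space with path-shaped Hasse diagram, witnessed by an enumeration
`e : Fin n ≃ X` in which the Hasse edges are exactly the consecutive pairs, a nonempty
subset `Y` is connected and locally closed iff it is an interval `{e k | i ≤ k ≤ j}`
of the enumeration. -/
theorem stmt12 {X : Type*} [TopologicalSpace X] [Finite X] [T0Space X]
    (n : ℕ) (e : Fin n ≃ X)
    (he : ∀ i j : Fin n,
      (specCov (e i) (e j) ∨ specCov (e j) (e i)) ↔ (i.val + 1 = j.val ∨ j.val + 1 = i.val))
    (Y : Set X) (hY : Y.Nonempty) :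
    (IsConnected Y ∧ IsLocallyClosed Y) ↔
      ∃ i j : Fin n, i ≤ j ∧ Y = ⇑e '' {k : Fin n | i ≤ k ∧ k ≤ j} :=
  stmt12_general n e he Y hY
end

section
/- Let X be a finite T0 topological space that has path-shaped Hasse diagram, and let Y be a nonempty connected locally closed subset of X. Then the complement X \ Y has at most two connected components; that is, X \ Y can be written as the union of two (possibly empty) preconnected subsets. -/
/-! Index the points along the path by `f : X → ℕ`. Covering pairs have adjacent indices, so
along a maximal chain from `x` up to `y` the index passes through every value between those of
`x` and `y`; and a locally closed set is convex for the specialization order. Hence, if the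
indices of a connected locally closed `Y` skipped a value `j`, no specialization would relate a
point of `Y` with index below `j` to one with index above `j`, and these two parts would split
`Y` into clopen pieces. So the indices of `Y` form an interval, and `Yᶜ` is the union of the two
end segments of the path, each preconnected because consecutive points of the path are
comparable. -/

open Set Relation

theorem Relation.ReflTransGen.exists_apply_eq_of_mem_uIcc {α : Type*} {r : α → α → Prop}
    {f : α → ℕ} (hf : ∀ a b, r a b → f a + 1 = f b ∨ f b + 1 = f a) {a b : α}
    (hab : ReflTransGen r a b) {k : ℕ} (hk : k ∈ uIcc (f a) (f b)) :
    ∃ c, ReflTransGen r a c ∧ ReflTransGen r c b ∧ f c = k := by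
  induction hab with
  | refl => exact ⟨a, .refl, .refl, by simpa [eq_comm] using hk⟩
  | @tail c d hac hcd ih =>
    by_cases hkc : k ∈ uIcc (f a) (f c)
    · obtain ⟨z, haz, hzc, rfl⟩ := ih hkc
      exact ⟨z, haz, hzc.tail hcd, rfl⟩
    · refine ⟨d, hac.tail hcd, .refl, ?_⟩
      have := hf c d hcd
      simp only [mem_uIcc] at hk hkc
      omega

theorem Set.OrdConnected.compl_eq {β : Type*} [LinearOrder β] {s : Set β} (hs : s.OrdConnected) :
    sᶜ = {x | ∀ y ∈ s, x < y} ∪ {x | ∀ y ∈ s, y < x} := by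
  ext x
  simp only [mem_compl_iff, mem_union, mem_ofPred_eq]
  constructor
  · intro hx
    by_contra! h
    obtain ⟨⟨a, ha, hax⟩, b, hb, hxb⟩ := h
    exact hx (hs.out ha hb ⟨hax, hxb⟩)
  · rintro (h | h) hx <;> exact lt_irrefl x (h x hx)

section Specialization

variable {X : Type*} [TopologicalSpace X]

theorem continuous_of_forall_specializes [AlexandrovDiscrete X] {Z : Type*} [TopologicalSpace Z]
    {f : X → Z} (hf : ∀ x y, x ⤳ y → f x ⤳ f y) : Continuous f :=
  continuous_def.2 fun _ hU =>
    isOpen_iff_forall_specializes.2 fun x y hxy hy => (hf x y hxy).mem_open hU hy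

theorem IsPreconnected.apply_eq_of_forall_specializes [AlexandrovDiscrete X] {Z : Type*}
    [TopologicalSpace Z] [DiscreteTopology Z] {s : Set X} (hs : IsPreconnected s) {f : X → Z}
    (hf : ∀ x ∈ s, ∀ y ∈ s, x ⤳ y → f x = f y) {x y : X} (hx : x ∈ s) (hy : y ∈ s) :
    f x = f y := by
  refine hs.constant (continuousOn_iff_continuous_domRestrict.2 <|
    continuous_of_forall_specializes fun a b hab => ?_) hx hy
  show f a ⤳ f b
  rw [hf a a.2 b b.2 ((subtype_specializes_iff a b).1 hab)]

theorem IsLocallyClosed.mem_of_specializes {s : Set X} (hs : IsLocallyClosed s) {x y z : X}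
    (hxy : x ⤳ y) (hyz : y ⤳ z) (hx : x ∈ s) (hz : z ∈ s) : y ∈ s := by
  obtain ⟨U, Z, hU, hZ, rfl⟩ := hs
  exact ⟨hyz.mem_open hU hz.1, hxy.mem_closed hZ hx.2⟩

theorem isPreconnected_of_subset_pair {s : Set X} {x y : X} (hs : s ⊆ {x, y})
    (hxy : x ⤳ y ∨ y ⤳ x) : IsPreconnected s := by
  wlog h : x ⤳ y generalizing x y
  · exact this (pair_comm x y ▸ hs) hxy.symm (hxy.resolve_left h)
  have hpair : IsPreconnected ({x, y} : Set X) :=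
    isPreconnected_singleton.subset_closure (singleton_subset_iff.2 (mem_insert x _)) <|
      insert_subset (subset_closure rfl) <|
        singleton_subset_iff.2 (specializes_iff_mem_closure.1 h)
  rcases subset_pair_iff_eq.1 hs with rfl | rfl | rfl | rfl
  exacts [isPreconnected_empty, isPreconnected_singleton, isPreconnected_singleton, hpair]

theorem isPreconnected_image_of_ordConnected {β : Type*} [LinearOrder β] [SuccOrder β]
    [IsSuccArchimedean β] {g : β → X} (hg : ∀ i j, i ⋖ j → g i ⤳ g j ∨ g j ⤳ g i) {t : Set β}
    (ht : t.OrdConnected) : IsPreconnected (g '' t) := by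
  have hunion : g '' t = ⋃ i ∈ t, g '' ({i, Order.succ i} ∩ t) := by
    refine Subset.antisymm ?_ (iUnion₂_subset fun i _ => image_mono inter_subset_right)
    rintro _ ⟨i, hi, rfl⟩
    exact mem_biUnion hi (mem_image_of_mem g ⟨mem_insert i _, hi⟩)
  rw [hunion]
  refine IsPreconnected.biUnion_of_chain ht (fun i _ => ?_) fun i _ hsi =>
    ⟨g (Order.succ i), mem_image_of_mem g ⟨mem_insert_of_mem _ rfl, hsi⟩,
      mem_image_of_mem g ⟨mem_insert _ _, hsi⟩⟩
  refine isPreconnected_of_subset_pair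
    ((image_mono inter_subset_left).trans (image_pair ..).subset) ?_
  by_cases hmax : IsMax i
  · rw [Order.succ_eq_iff_isMax.2 hmax]
    exact Or.inl specializes_rfl
  · exact hg _ _ (Order.covBy_succ_of_not_isMax hmax)

theorem specializes_of_specCov {x y : X} (h : specCov x y) : y ⤳ x :=
  specializes_iff_mem_closure.2 h.1.1

variable [Finite X] [T0Space X]

theorem reflTransGen_specCov_iff {x y : X} : ReflTransGen specCov x y ↔ y ⤳ x := by
  let := specializationOrder X
  have := Fintype.ofFinite X
  classical
  let : LocallyFiniteOrder X := Fintype.toLocallyFiniteOrder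
  -- in `specializationOrder X`, `a ≤ b` unfolds to `b ⤳ a`, which is `specLE a b`
  have hcov : (specCov : X → X → Prop) = (· ⋖ ·) := by
    ext a b
    simp only [specCov, specLT, specLE, ← specializes_iff_mem_closure, CovBy, lt_iff_le_and_ne,
      not_exists, not_and]
    exact Iff.rfl
  rw [hcov, ← le_iff_reflTransGen_covBy]
  rfl

theorem Specializes.exists_apply_eq_of_mem_uIcc {f : X → ℕ}
    (hf : ∀ x y, specCov x y → f x + 1 = f y ∨ f y + 1 = f x) {x y : X} (hxy : x ⤳ y) {k : ℕ}
    (hk : k ∈ uIcc (f x) (f y)) : ∃ z, x ⤳ z ∧ z ⤳ y ∧ f z = k := by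
  obtain ⟨z, hyz, hzx, rfl⟩ :=
    (reflTransGen_specCov_iff.2 hxy).exists_apply_eq_of_mem_uIcc hf (uIcc_comm (f x) (f y) ▸ hk)
  exact ⟨z, reflTransGen_specCov_iff.1 hzx, reflTransGen_specCov_iff.1 hyz, rfl⟩

theorem IsPreconnected.ordConnected_image_of_isLocallyClosed {f : X → ℕ}
    (hf : ∀ x y, specCov x y → f x + 1 = f y ∨ f y + 1 = f x) {Y : Set X}
    (hY : IsPreconnected Y) (hYlc : IsLocallyClosed Y) : (f '' Y).OrdConnected := by
  refine ⟨?_⟩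
  rintro _ ⟨a, ha, rfl⟩ _ ⟨b, hb, rfl⟩ j ⟨haj, hjb⟩
  by_contra hj
  have hne : ∀ x ∈ Y, f x ≠ j := fun x hx h => hj ⟨x, hx, h⟩
  have hside : ∀ x ∈ Y, ∀ y ∈ Y, x ⤳ y → decide (f x < j) = decide (f y < j) := by
    intro x hx y hy hxy
    rw [decide_eq_decide]
    by_contra hcross
    have hj_mem : j ∈ uIcc (f x) (f y) := by
      have := hne x hx
      have := hne y hy
      rw [mem_uIcc]
      omega
    obtain ⟨z, hxz, hzy, hzj⟩ := hxy.exists_apply_eq_of_mem_uIcc hf hj_mem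
    exact hne z (hYlc.mem_of_specializes hxz hzy hx hy) hzj
  have hab := hY.apply_eq_of_forall_specializes hside ha hb
  have := hne a ha
  simp only [decide_eq_decide] at hab
  omega

end Specialization

/-- In a finite T0-space with path-shaped Hasse diagram, the complement of a nonempty
connected locally closed subset has at most two connected components: it is the union of
two (possibly empty) preconnected subsets. -/
theorem stmt15 {X : Type*} [TopologicalSpace X] [Finite X] [T0Space X] (n : ℕ)
    (hpath : ∃ e : Fin n ≃ X, ∀ i j : Fin n,
      (specCov (e i) (e j) ∨ specCov (e j) (e i)) ↔ (i.val + 1 = j.val ∨ j.val + 1 = i.val))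
    (Y : Set X) (hY : IsConnected Y) (hYlc : IsLocallyClosed Y) :
    ∃ A B : Set X, IsPreconnected A ∧ IsPreconnected B ∧ Yᶜ = A ∪ B := by
  obtain ⟨e, he⟩ := hpath
  set f : X → ℕ := fun x => e.symm x
  have hf : ∀ x y, specCov x y → f x + 1 = f y ∨ f y + 1 = f x := fun x y h =>
    (he _ _).1 (Or.inl (by simpa using h))
  have hcomparable : ∀ i j : Fin n, i ⋖ j → e i ⤳ e j ∨ e j ⤳ e i := fun i j hij =>
    ((he i j).2 (Or.inl (by simpa using hij))).symm.imp specializes_of_specCov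
      specializes_of_specCov
  have hI : (f '' Y).OrdConnected :=
    hY.isPreconnected.ordConnected_image_of_isLocallyClosed hf hYlc
  refine ⟨e '' {i | ∀ y ∈ Y, (i : ℕ) < f y}, e '' {i | ∀ y ∈ Y, f y < i},
    isPreconnected_image_of_ordConnected hcomparable (IsLowerSet.ordConnected
      fun i j hji hi y hy => lt_of_le_of_lt hji (hi y hy)),
    isPreconnected_image_of_ordConnected hcomparable (IsUpperSet.ordConnected
      fun i j hij hi y hy => lt_of_lt_of_le (hi y hy) hij), ?_⟩
  have hinj : f.Injective := Fin.val_injective.comp e.symm.injective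
  calc Yᶜ = f ⁻¹' (f '' Y)ᶜ := by rw [preimage_compl, hinj.preimage_image]
    _ = _ := by
        rw [hI.compl_eq, preimage_union, e.image_eq_preimage_symm, e.image_eq_preimage_symm]
        simp only [preimage_ofPred_eq, forall_mem_image]
        rfl
end
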